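/- arXiv:0909.1359 — 4 statements merged into one kernel-verified Lean document; each statement's English description precedes it below -/
import Mathlib

section
/- For p > 3 prime, the exact sequence of F_p[SL_2(F_p)]-modules 0 → V_1 → V_p → V_{p-2} → 0, where the first map is the Serre operator D(f) = X^p ∂f/∂X + Y^p ∂f/∂Y, does not split; i.e., V_p is a non-split extension of V_{p-2} by V_1. -/
open MvPolynomial

/-- The Serre operator `D f = X^q ∂f/∂X + Y^q ∂f/∂Y` as a linear map. -/
noncomputable def serreDLin (F : Type*) [CommRing F] (q : ℕ) :
    MvPolynomial (Fin 2) F →ₗ[F] MvPolynomial (Fin 2) F :=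
  (LinearMap.mulLeft F (X 0 ^ q)) ∘ₗ (pderiv 0).toLinearMap +
    (LinearMap.mulLeft F (X 1 ^ q)) ∘ₗ (pderiv 1).toLinearMap

/-- The action of a matrix `g = [[a,b],[c,d]]` on `F[X, Y]`, determined by
`g · X = aX + cY`, `g · Y = bX + dY`. -/
noncomputable def matAct {F : Type*} [CommRing F] (g : Matrix (Fin 2) (Fin 2) F) :
    MvPolynomial (Fin 2) F →ₐ[F] MvPolynomial (Fin 2) F :=
  aeval (fun i => ∑ j, C (g j i) * X j)

/-!
Let `N = ∑_b [[1, b], [0, 1]]` be the norm element of the upper unipotent subgroup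
of `SL₂(𝔽_p)`. Since `∑_b b^k = 0` for `k < p - 1` and `∑_b b^(p-1) = -1`, `N` sends
`X Y^(p-1)` to `-X^p`, while for odd `p` it kills both `X^p` and `Y^p`, hence all of
`D(V_1)`. If `M` were a stable complement of `D(V_1)` in `V_p`, writing
`X Y^(p-1) = m + D f` would give `-X^p = N m ∈ M`; but `X^p = D X`, so `X^p ∈ M ⊓ D(V_1) = 0`.
-/

theorem FiniteField.sum_pow_card_sub_one {K : Type*} [Field K] [Fintype K] :
    ∑ b : K, b ^ (Fintype.card K - 1) = -1 := by
  classical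
  have hq : Fintype.card K - 1 ≠ 0 := by
    have := Fintype.one_lt_card (α := K); omega
  calc ∑ b : K, b ^ (Fintype.card K - 1) = ∑ b : K, if b = 0 then 0 else 1 := by
        refine Finset.sum_congr rfl fun b _ => ?_
        split_ifs with hb
        · rw [hb, zero_pow hq]
        · exact FiniteField.pow_card_sub_one_eq_one b hb
    _ = -1 := by
        simp [Finset.sum_ite, Finset.filter_ne', Nat.cast_sub Fintype.card_pos]

theorem FiniteField.sum_smul_add_pow_card_sub_one {K A : Type*} [Field K] [Fintype K]
    [CommRing A] [Algebra K A] (x y : A) :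
    ∑ b : K, (b • x + y) ^ (Fintype.card K - 1) = -x ^ (Fintype.card K - 1) := by
  set n := Fintype.card K - 1
  calc ∑ b : K, (b • x + y) ^ n
      = ∑ k ∈ Finset.range (n + 1),
          (∑ b : K, b ^ k) • (x ^ k * y ^ (n - k) * n.choose k) := by
        simp_rw [add_pow, Finset.sum_comm (s := Finset.univ), Finset.sum_smul, smul_pow,
          smul_mul_assoc]
    _ = -x ^ n := by
        rw [Finset.sum_range_succ, Finset.sum_eq_zero fun k hk => by
          rw [FiniteField.sum_pow_lt_card_sub_one K k (Finset.mem_range.mp hk), zero_smul]]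
        simp [FiniteField.sum_pow_card_sub_one, n]

theorem ZMod.sum_smul_add_pow_self {A : Type*} {p : ℕ} [Fact p.Prime] [CommRing A]
    [Algebra (ZMod p) A] [CharP A p] (hp : p ≠ 2) (x y : A) :
    ∑ b : ZMod p, (b • x + y) ^ p = 0 := by
  have hsum : ∑ b : ZMod p, b = 0 := by
    simpa using FiniteField.sum_pow_lt_card_sub_one (K := ZMod p) 1
      (by have := (Fact.out : p.Prime).two_le; rw [ZMod.card]; omega)
  simp_rw [add_pow_char, smul_pow, ZMod.pow_card, Finset.sum_add_distrib, ← Finset.sum_smul,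
    hsum, zero_smul, Finset.sum_const, Finset.card_univ, ZMod.card, nsmul_eq_mul,
    CharP.cast_eq_zero, zero_mul, add_zero]

lemma serreDLin_X {F : Type*} [CommRing F] (q : ℕ) (i : Fin 2) :
    serreDLin F q (X i) = X i ^ q := by
  fin_cases i <;> simp [serreDLin, pderiv_X]

section Shear

variable {F : Type*}

def shear [CommRing F] (b : F) : Matrix.SpecialLinearGroup (Fin 2) F :=
  ⟨!![1, b; 0, 1], by simp [Matrix.det_fin_two_of]⟩

lemma matAct_shear_X_zero [CommRing F] (b : F) :
    matAct (shear b : Matrix (Fin 2) (Fin 2) F) (X 0) = X 0 := by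
  simp [matAct, shear, Fin.sum_univ_two]

lemma matAct_shear_X_one [CommRing F] (b : F) :
    matAct (shear b : Matrix (Fin 2) (Fin 2) F) (X 1) = b • X 0 + X 1 := by
  simp [matAct, shear, Fin.sum_univ_two, smul_eq_C_mul]

variable [Field F] [Fintype F]

noncomputable def shearSum : MvPolynomial (Fin 2) F →ₗ[F] MvPolynomial (Fin 2) F :=
  ∑ b : F, (matAct (shear b : Matrix (Fin 2) (Fin 2) F)).toLinearMap

lemma shearSum_apply (f : MvPolynomial (Fin 2) F) :
    shearSum f = ∑ b : F, matAct (shear b : Matrix (Fin 2) (Fin 2) F) f := by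
  simp [shearSum]

lemma shearSum_mem {M : Submodule F (MvPolynomial (Fin 2) F)}
    (hM : ∀ g : Matrix.SpecialLinearGroup (Fin 2) F, ∀ f ∈ M,
      matAct (g : Matrix (Fin 2) (Fin 2) F) f ∈ M)
    {f : MvPolynomial (Fin 2) F} (hf : f ∈ M) : shearSum f ∈ M := by
  rw [shearSum_apply]
  exact Submodule.sum_mem _ fun b _ => hM _ f hf

lemma shearSum_X_zero_pow (n : ℕ) : shearSum (X 0 ^ n : MvPolynomial (Fin 2) F) = 0 := by
  simp_rw [shearSum_apply, map_pow, matAct_shear_X_zero]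
  rw [Finset.sum_const, Finset.card_univ, ← Nat.cast_smul_eq_nsmul F,
    FiniteField.cast_card_eq_zero, zero_smul]

lemma shearSum_X_zero_mul_X_one_pow :
    shearSum (X 0 * X 1 ^ (Fintype.card F - 1) : MvPolynomial (Fin 2) F) =
      -X 0 ^ Fintype.card F := by
  simp_rw [shearSum_apply, map_mul, map_pow, matAct_shear_X_zero, matAct_shear_X_one,
    ← Finset.mul_sum, FiniteField.sum_smul_add_pow_card_sub_one, mul_neg,
    mul_pow_sub_one Fintype.card_ne_zero]

end Shear

lemma shearSum_X_one_pow {p : ℕ} [Fact p.Prime] (hp : p ≠ 2) :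
    shearSum (X 1 ^ p : MvPolynomial (Fin 2) (ZMod p)) = 0 := by
  simp_rw [shearSum_apply, map_pow, matAct_shear_X_one, ZMod.sum_smul_add_pow_self hp]

lemma homogeneousSubmodule_one_le_ker_shearSum_comp_serreDLin {p : ℕ} [Fact p.Prime]
    (hp : p ≠ 2) :
    homogeneousSubmodule (Fin 2) (ZMod p) 1 ≤
      LinearMap.ker (shearSum ∘ₗ serreDLin (ZMod p) p) := by
  rw [homogeneousSubmodule_one_eq_span_X, Submodule.span_le]
  rintro _ ⟨i, rfl⟩
  fin_cases i <;> simp [serreDLin_X, shearSum_X_zero_pow, shearSum_X_one_pow hp]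

/-- For `p > 3`, the exact sequence `0 → V_1 → V_p → V_{p-2} → 0` of
`F_p[SL₂(F_p)]`-modules, with first map the Serre operator `D`, does not split:
the image `D(V_1)` has no `SL₂(F_p)`-stable complement inside `V_p`. -/
theorem Vp_extension_nonsplit (p : ℕ) [Fact p.Prime] (hp : 3 < p) :
    ¬ ∃ M : Submodule (ZMod p) (MvPolynomial (Fin 2) (ZMod p)),
      M ≤ homogeneousSubmodule (Fin 2) (ZMod p) p ∧
      (∀ g : Matrix.SpecialLinearGroup (Fin 2) (ZMod p), ∀ f ∈ M,
        matAct (↑g : Matrix (Fin 2) (Fin 2) (ZMod p)) f ∈ M) ∧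
      M ⊓ Submodule.map (serreDLin (ZMod p) p)
          (homogeneousSubmodule (Fin 2) (ZMod p) 1) = ⊥ ∧
      M ⊔ Submodule.map (serreDLin (ZMod p) p)
          (homogeneousSubmodule (Fin 2) (ZMod p) 1) =
        homogeneousSubmodule (Fin 2) (ZMod p) p := by
  rintro ⟨M, -, hstab, hinf, hsup⟩
  set W := Submodule.map (serreDLin (ZMod p) p) (homogeneousSubmodule (Fin 2) (ZMod p) 1)
  have hXY : (X 0 * X 1 ^ (p - 1) : MvPolynomial (Fin 2) (ZMod p)) ∈ M ⊔ W := by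
    have := (isHomogeneous_X (ZMod p) (0 : Fin 2)).mul
      ((isHomogeneous_X (ZMod p) (1 : Fin 2)).pow (p - 1))
    rwa [show 1 + 1 * (p - 1) = p by omega, ← mem_homogeneousSubmodule, ← hsup] at this
  obtain ⟨m, hm, _, ⟨f, hf, rfl⟩, hmf⟩ := Submodule.mem_sup.mp hXY
  have hmX : shearSum m = -X 0 ^ p := by
    have hDf := homogeneousSubmodule_one_le_ker_shearSum_comp_serreDLin (by omega) hf
    rw [LinearMap.mem_ker, LinearMap.comp_apply] at hDf
    have hshear := shearSum_X_zero_mul_X_one_pow (F := ZMod p)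
    rw [ZMod.card] at hshear
    rwa [← hmf, map_add, hDf, add_zero] at hshear
  have hX : (X 0 ^ p : MvPolynomial (Fin 2) (ZMod p)) ∈ M ⊓ W :=
    ⟨neg_mem_iff.mp (hmX ▸ shearSum_mem hstab hm),
      X 0, (mem_homogeneousSubmodule _ _).mpr (isHomogeneous_X _ 0), serreDLin_X p 0⟩
  rw [hinf, Submodule.mem_bot] at hX
  exact pow_ne_zero p (X_ne_zero 0) hX
end

section
/- For p > 3 prime, there is no injective homomorphism of F_p[GL_2(F_p)]-modules from V_p into V_{2p-1}. -/
/-!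
Let `q = T(X^p)`. Since `a^p = a` on `F_p`, the torus element `diag(a, 1)` scales `X^p`, hence `q`,
by `a`; so the only monomials `X^i Y^(2p-1-i)` in `q` have `i ≡ 1 mod p - 1`, i.e. `i ∈ {1, p, 2p-1}`.
The matrices `w : X ↦ Y, Y ↦ X` and `g : X ↦ X + Y, Y ↦ X` satisfy `X^p + w X^p = g X^p` in
characteristic `p`, so `q + w q = g q`. Comparing the coefficients of `X`, `X^p`, `X^(p+1)` after
setting `Y = 1` (Lucas' theorem gives the binomial coefficients mod `p`) forces `q = 0`,
contradicting injectivity.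
-/

open MvPolynomial

section MatAct

variable {R : Type*} [CommRing R]

theorem matAct_C (g : Matrix (Fin 2) (Fin 2) R) (c : R) : matAct g (C c) = C c :=
  (matAct g).commutes c

theorem matAct_X (g : Matrix (Fin 2) (Fin 2) R) (i : Fin 2) :
    matAct g (X i) = C (g 0 i) * X 0 + C (g 1 i) * X 1 := by
  simp [matAct, Fin.sum_univ_two]

theorem matAct_diagonal_X (s : Fin 2 → R) (i : Fin 2) :
    matAct (Matrix.diagonal s) (X i) = C (s i) * X i := by
  fin_cases i <;> simp [matAct_X]

theorem matAct_diagonal_monomial (s : Fin 2 → R) (d : Fin 2 →₀ ℕ) (c : R) :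
    matAct (Matrix.diagonal s) (monomial d c) = monomial d (s 0 ^ d 0 * s 1 ^ d 1 * c) := by
  simp only [monomial_eq, Finsupp.prod_fintype _ _ (fun _ => pow_zero _), Fin.prod_univ_two,
    map_mul, map_pow, matAct_C, matAct_diagonal_X, mul_pow]
  ring

theorem coeff_matAct_diagonal (s : Fin 2 → R) (φ : MvPolynomial (Fin 2) R) (d : Fin 2 →₀ ℕ) :
    coeff d (matAct (Matrix.diagonal s) φ) = s 0 ^ d 0 * s 1 ^ d 1 * coeff d φ := by
  induction φ using MvPolynomial.induction_on' with
  | monomial e c =>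
    rw [matAct_diagonal_monomial, coeff_monomial, coeff_monomial]
    split_ifs with h
    · rw [h]
    · simp
  | add φ ψ hφ hψ => simp only [map_add, coeff_add, hφ, hψ, mul_add]

end MatAct

theorem monomial_single_add_single {R : Type*} [CommSemiring R] (a b : ℕ) (c : R) :
    monomial (Finsupp.single (0 : Fin 2) a + Finsupp.single 1 b) c = C c * X 0 ^ a * X 1 ^ b := by
  rw [X_pow_eq_monomial, X_pow_eq_monomial, C_apply, monomial_mul, monomial_mul, zero_add, mul_one,
    mul_one]

theorem Nat.eq_one_or_eq_or_eq_two_mul_sub_one_of_modEq {p n : ℕ} (hp : 3 ≤ p)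
    (hn : n ≤ 2 * p - 1) (h : n ≡ 1 [MOD p - 1]) : n = 1 ∨ n = p ∨ n = 2 * p - 1 := by
  have hmod : n % (p - 1) = 1 := by
    rw [h, Nat.mod_eq_of_lt (by omega)]
  have hdiv : n / (p - 1) ≤ 2 := by
    rw [Nat.div_le_iff_le_mul_add_pred (by omega)]
    omega
  have := Nat.div_add_mod n (p - 1)
  interval_cases n / (p - 1) <;> omega

section ZModP

variable {p : ℕ} [Fact p.Prime]

theorem ZMod.modEq_one_of_forall_units_pow_eq_self {n : ℕ}
    (h : ∀ a : (ZMod p)ˣ, (a : ZMod p) ^ n = a) : n ≡ 1 [MOD p - 1] := by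
  obtain ⟨g, hg⟩ := IsCyclic.exists_generator (α := (ZMod p)ˣ)
  have hord : orderOf g = p - 1 := by
    rw [orderOf_eq_card_of_forall_mem_zpowers hg, Nat.card_eq_fintype_card, ZMod.card_units]
  rw [← hord, ← pow_eq_pow_iff_modEq, pow_one]
  exact Units.ext (by simpa using h g)

theorem ZMod.natCast_choose_two_mul_sub_one (k : ℕ) :
    ((2 * p - 1).choose k : ZMod p) = ((p - 1).choose (k % p) * Nat.choose 1 (k / p) : ℕ) := by
  have hp := (Fact.out : p.Prime).one_lt
  have h : 2 * p - 1 = p - 1 + p * 1 := by omega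
  have hmod : (2 * p - 1) % p = p - 1 := by
    rw [h, Nat.add_mul_mod_self_left, Nat.mod_eq_of_lt (by omega)]
  have hdiv : (2 * p - 1) / p = 1 := by
    rw [h, Nat.add_mul_div_left _ _ (by omega), Nat.div_eq_of_lt (by omega), zero_add]
  have := Choose.choose_modEq_choose_mod_mul_choose_div_nat (n := 2 * p - 1) (k := k) (p := p)
  rwa [hmod, hdiv, ← ZMod.natCast_eq_natCast_iff] at this

theorem modEq_one_of_coeff_ne_zero {φ : MvPolynomial (Fin 2) (ZMod p)}
    (hφ : ∀ a : (ZMod p)ˣ, matAct (Matrix.diagonal ![(a : ZMod p), 1]) φ = C (a : ZMod p) * φ)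
    {d : Fin 2 →₀ ℕ} (hd : coeff d φ ≠ 0) : d 0 ≡ 1 [MOD p - 1] := by
  refine ZMod.modEq_one_of_forall_units_pow_eq_self fun a => ?_
  have := congrArg (coeff d) (hφ a)
  rw [coeff_matAct_diagonal, coeff_C_mul] at this
  simpa using mul_right_cancel₀ hd this

theorem exists_eq_of_isHomogeneous_of_weight (hp : 3 ≤ p) {φ : MvPolynomial (Fin 2) (ZMod p)}
    (hhom : φ.IsHomogeneous (2 * p - 1))
    (hφ : ∀ a : (ZMod p)ˣ, matAct (Matrix.diagonal ![(a : ZMod p), 1]) φ = C (a : ZMod p) * φ) :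
    ∃ A B G : ZMod p, φ = C A * X 0 * X 1 ^ (2 * p - 2) + C B * X 0 ^ p * X 1 ^ (p - 1) +
      C G * X 0 ^ (2 * p - 1) := by
  let e (i : ℕ) : Fin 2 →₀ ℕ := Finsupp.single 0 i + Finsupp.single 1 (2 * p - 1 - i)
  have hsupp : φ.support ⊆ ({1, p, 2 * p - 1} : Finset ℕ).image e := by
    intro d hd
    rw [mem_support_iff] at hd
    have hdeg : d 0 + d 1 = 2 * p - 1 := by
      simpa [Finsupp.weight_apply, Finsupp.sum_fintype] using hhom hd
    refine Finset.mem_image.mpr ⟨d 0, ?_, ?_⟩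
    · simpa using Nat.eq_one_or_eq_or_eq_two_mul_sub_one_of_modEq hp (by omega)
        (modEq_one_of_coeff_ne_zero hφ hd)
    · exact Finsupp.ext (Fin.forall_fin_two.mpr ⟨by simp [e], by simp [e, ← hdeg]⟩)
  have he : Set.InjOn e ({1, p, 2 * p - 1} : Finset ℕ) := fun i _ j _ hij => by
    simpa [e] using DFunLike.congr_fun hij 0
  rw [φ.as_sum, Finset.sum_subset hsupp (fun d _ hd => by rw [notMem_support_iff.mp hd, map_zero]),
    Finset.sum_image he, Finset.sum_insert (by simp; omega), Finset.sum_insert (by simp; omega),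
    Finset.sum_singleton]
  refine ⟨coeff (e 1) φ, coeff (e p) φ, coeff (e (2 * p - 1)) φ, ?_⟩
  simp only [e, monomial_single_add_single]
  rw [show 2 * p - 1 - 1 = 2 * p - 2 by omega, show 2 * p - 1 - p = p - 1 by omega, Nat.sub_self,
    pow_zero, mul_one, pow_one, add_assoc]

theorem eq_zero_of_add_matAct_swap_eq_matAct (hp : 3 < p) {φ : MvPolynomial (Fin 2) (ZMod p)}
    (hhom : φ.IsHomogeneous (2 * p - 1))
    (hφ : ∀ a : (ZMod p)ˣ, matAct (Matrix.diagonal ![(a : ZMod p), 1]) φ = C (a : ZMod p) * φ)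
    (hrel : φ + matAct !![0, 1; 1, 0] φ = matAct !![1, 1; 1, 0] φ) : φ = 0 := by
  obtain ⟨A, B, G, rfl⟩ := exists_eq_of_isHomogeneous_of_weight hp.le hhom hφ
  have key : Polynomial.C A * Polynomial.X + Polynomial.C B * Polynomial.X ^ p +
        Polynomial.C G * Polynomial.X ^ (2 * p - 1) + (Polynomial.C A * Polynomial.X ^ (2 * p - 2) +
        Polynomial.C B * Polynomial.X ^ (p - 1) + Polynomial.C G) =
      Polynomial.C A * (Polynomial.X + 1) * Polynomial.X ^ (2 * p - 2) +
        Polynomial.C B * (Polynomial.X ^ p + 1) * Polynomial.X ^ (p - 1) +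
        Polynomial.C G * (Polynomial.X + 1) ^ (2 * p - 1) := by
    simpa [matAct_X, add_pow_char] using
      congrArg (aeval ![Polynomial.X, (1 : Polynomial (ZMod p))]) hrel
  have hcoeff (k : ℕ) := congrArg (Polynomial.coeff · k) key
  have hA : A = -G := by
    simpa (disch := omega) [Polynomial.coeff_X_pow, Polynomial.coeff_mul_X_pow', Polynomial.coeff_X,
      Polynomial.coeff_one, Polynomial.coeff_C, Polynomial.coeff_X_add_one_pow, if_neg] using hcoeff 1
  have hB : B = G := by
    simpa (disch := omega) [Polynomial.coeff_X_pow, Polynomial.coeff_mul_X_pow', Polynomial.coeff_X,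
      Polynomial.coeff_one, Polynomial.coeff_C, Polynomial.coeff_X_add_one_pow,
      ZMod.natCast_choose_two_mul_sub_one, if_neg, Nat.div_self] using hcoeff p
  -- As `p > 3`, only `(X + 1) ^ (2p - 1)` contributes to the coefficient of `X ^ (p + 1)`.
  have hG : G = 0 := by
    have hmod : (p + 1) % p = 1 := by rw [Nat.add_mod_left, Nat.mod_eq_of_lt (by omega)]
    have hdiv : (p + 1) / p = 1 := by rw [Nat.add_div_left _ (by omega), Nat.div_eq_of_lt (by omega)]
    simpa (disch := omega) [Polynomial.coeff_X_pow, Polynomial.coeff_mul_X_pow', Polynomial.coeff_X,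
      Polynomial.coeff_one, Polynomial.coeff_C, Polynomial.coeff_X_add_one_pow,
      ZMod.natCast_choose_two_mul_sub_one, if_neg, hmod, hdiv] using hcoeff (p + 1)
  simp [hA, hB, hG]

end ZModP

/-- For `p > 3` prime there is no injective homomorphism of
`F_p[GL₂(F_p)]`-modules from `V_p = Sym^p F_p²` into `V_{2p-1} = Sym^{2p-1} F_p²`. -/
theorem no_embedding_Vp_into_V2pm1 (p : ℕ) [Fact p.Prime] (hp : 3 < p) :
    ¬ ∃ T : MvPolynomial (Fin 2) (ZMod p) →ₗ[ZMod p] MvPolynomial (Fin 2) (ZMod p),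
      (∀ f ∈ homogeneousSubmodule (Fin 2) (ZMod p) p,
        T f ∈ homogeneousSubmodule (Fin 2) (ZMod p) (2 * p - 1)) ∧
      (∀ f ∈ homogeneousSubmodule (Fin 2) (ZMod p) p, T f = 0 → f = 0) ∧
      (∀ g : GL (Fin 2) (ZMod p), ∀ f ∈ homogeneousSubmodule (Fin 2) (ZMod p) p,
        T (matAct (↑g : Matrix (Fin 2) (Fin 2) (ZMod p)) f) =
          matAct (↑g : Matrix (Fin 2) (Fin 2) (ZMod p)) (T f)) := by
  rintro ⟨T, hT_deg, hT_inj, hT_equiv⟩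
  have hXp : (X 0 ^ p : MvPolynomial (Fin 2) (ZMod p)) ∈ homogeneousSubmodule (Fin 2) (ZMod p) p :=
    (mem_homogeneousSubmodule _ _).mpr (isHomogeneous_X_pow 0 p)
  have hT (M : Matrix (Fin 2) (Fin 2) (ZMod p)) (hM : M.det ≠ 0) :
      T (matAct M (X 0 ^ p)) = matAct M (T (X 0 ^ p)) :=
    hT_equiv (.mkOfDetNeZero M hM) _ hXp
  have hq : T (X 0 ^ p) = 0 := by
    refine eq_zero_of_add_matAct_swap_eq_matAct hp
      ((mem_homogeneousSubmodule _ _).mp (hT_deg _ hXp)) (fun a => ?_) ?_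
    · rw [← hT _ (by simp), map_pow, matAct_diagonal_X, Matrix.cons_val_zero, mul_pow, ← C_pow,
        ZMod.pow_card, C_mul', map_smul, C_mul']
    · rw [← hT _ (by simp), ← hT _ (by simp), ← map_add]
      simp [matAct_X, add_pow_char]
  exact pow_ne_zero p (X_ne_zero 0) (hT_inj _ hXp hq)
end

section
/- For p prime, there is an isomorphism of F_p[SL_2(F_p)]-modules V_{2p-1} ≅ V_1 ⊗ V_{p-1}, induced by restriction from the Steinberg tensor product decomposition over F_{p^2}. -/
/-!
Let `V_n` be the binary forms of degree `n`, with monomial basis `X^i Y^(n-i)`, and let `m = b + 1`.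
Division with remainder `k = m i + j`, `j < m`, matches the basis `X^(m i) Y^(m (a-i)) ⊗ X^j Y^(b-j)`
of `V_a ⊗ V_b` (first factor expanded by `X ↦ X^m`, `Y ↦ Y^m`) bijectively with the monomial basis
of `V_N`, where `N + 1 = (a + 1) m`. Hence `f ⊗ g ↦ f(X^m, Y^m) g` is an isomorphism
`V_a ⊗ V_b ≅ V_N` over any coefficient ring. Over `𝔽_p` with `m = p` one has `f(X^p, Y^p) = f^p`,
so this isomorphism commutes with every algebra endomorphism of `𝔽_p[X, Y]`, in particular with
the action of `SL₂(𝔽_p)`.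
-/

open MvPolynomial TensorProduct

namespace MvPolynomial

variable (R : Type*) [CommSemiring R]

lemma homogeneousSubmodule_eq_restrictSupport (σ : Type*) (n : ℕ) :
    homogeneousSubmodule σ R n = restrictSupport R {d : σ →₀ ℕ | d.degree = n} :=
  homogeneousSubmodule_eq_finsupp_supported σ R n

lemma basisRestrictSupport_apply {σ : Type*} (s : Set (σ →₀ ℕ)) (d : s) :
    (basisRestrictSupport R s d : MvPolynomial σ R) = monomial d 1 := by
  classical
  change ((AddMonoidAlgebra.supportedEquivFinsupp (R := R) (S := R) s).symm
    (Finsupp.single d 1) : MvPolynomial σ R) = _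
  simp [AddMonoidAlgebra.supportedEquivFinsupp, single_eq_monomial]

noncomputable def basisHomogeneousSubmodule (σ : Type*) (n : ℕ) :
    Module.Basis {d : σ →₀ ℕ // d.degree = n} R (homogeneousSubmodule σ R n) :=
  (basisRestrictSupport R {d | d.degree = n}).map
    (LinearEquiv.ofEq _ _ (homogeneousSubmodule_eq_restrictSupport R σ n).symm)

lemma basisHomogeneousSubmodule_apply {σ : Type*} {n : ℕ} (d : {d : σ →₀ ℕ // d.degree = n}) :
    (basisHomogeneousSubmodule R σ n d : MvPolynomial σ R) = monomial d 1 := by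
  rw [basisHomogeneousSubmodule, Module.Basis.map_apply, LinearEquiv.coe_ofEq_apply,
    basisRestrictSupport_apply]

noncomputable def finSuccEquivDegreeEq (n : ℕ) :
    Fin (n + 1) ≃ {d : Fin 2 →₀ ℕ // d.degree = n} where
  toFun i := ⟨Finsupp.single 0 (i : ℕ) + Finsupp.single 1 (n - i : ℕ), by
    rw [map_add, Finsupp.degree_single, Finsupp.degree_single]; omega⟩
  invFun d := ⟨d.1 0, by
    have := d.2; rw [Finsupp.degree_eq_sum, Fin.sum_univ_two] at this; omega⟩
  left_inv i := by simp
  right_inv d := by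
    obtain ⟨d, hd⟩ := d
    rw [Finsupp.degree_eq_sum, Fin.sum_univ_two] at hd
    ext j
    fin_cases j
    · simp
    · simp [← hd]

noncomputable def basisHomogeneousSubmoduleFinTwo (n : ℕ) :
    Module.Basis (Fin (n + 1)) R (homogeneousSubmodule (Fin 2) R n) :=
  (basisHomogeneousSubmodule R (Fin 2) n).reindex (finSuccEquivDegreeEq n).symm

@[simp]
lemma basisHomogeneousSubmoduleFinTwo_apply {n : ℕ} (i : Fin (n + 1)) :
    (basisHomogeneousSubmoduleFinTwo R n i : MvPolynomial (Fin 2) R) =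
      X 0 ^ (i : ℕ) * X 1 ^ (n - i) := by
  simp [basisHomogeneousSubmoduleFinTwo, basisHomogeneousSubmodule_apply, finSuccEquivDegreeEq,
    X_pow_eq_monomial, monomial_mul]

variable {R}

noncomputable def expandMul (a b : ℕ) :
    homogeneousSubmodule (Fin 2) R a ⊗[R] homogeneousSubmodule (Fin 2) R b →ₗ[R]
      MvPolynomial (Fin 2) R :=
  lift ((LinearMap.mul R _).compl₁₂ ((expand (b + 1)).toLinearMap ∘ₗ Submodule.subtype _)
    (Submodule.subtype _))

lemma expand_mul_monomial {a b N : ℕ} (h : (a + 1) * (b + 1) = N + 1) (i : Fin (a + 1))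
    (j : Fin (b + 1)) :
    expand (b + 1) (X 0 ^ (i : ℕ) * X 1 ^ (a - i)) * (X 0 ^ (j : ℕ) * X 1 ^ (b - j)) =
      (X 0 ^ (j + (b + 1) * i : ℕ) * X 1 ^ (N - (j + (b + 1) * i)) :
        MvPolynomial (Fin 2) R) := by
  have hi : (b + 1) * i ≤ (b + 1) * a := Nat.mul_le_mul_left (b + 1) i.is_le
  have hN : (b + 1) * a + b = N := by linarith
  have hexp : (b + 1) * (a - i) + (b - j) = N - (j + (b + 1) * i) := by
    rw [Nat.mul_sub]; have := j.is_le; omega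
  rw [← hexp]
  simp only [map_mul, map_pow, expand_X]
  ring

noncomputable def expandTensorEquiv (a b N : ℕ) (h : (a + 1) * (b + 1) = N + 1) :
    homogeneousSubmodule (Fin 2) R a ⊗[R] homogeneousSubmodule (Fin 2) R b ≃ₗ[R]
      homogeneousSubmodule (Fin 2) R N :=
  ((basisHomogeneousSubmoduleFinTwo R a).tensorProduct
      (basisHomogeneousSubmoduleFinTwo R b)).equiv
    (basisHomogeneousSubmoduleFinTwo R N) (finProdFinEquiv.trans (finCongr h))

lemma expandTensorEquiv_tmul {a b N : ℕ} (h : (a + 1) * (b + 1) = N + 1)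
    (f : homogeneousSubmodule (Fin 2) R a) (g : homogeneousSubmodule (Fin 2) R b) :
    (expandTensorEquiv a b N h (f ⊗ₜ g) : MvPolynomial (Fin 2) R) =
      expand (b + 1) (f : MvPolynomial (Fin 2) R) * g := by
  suffices (Submodule.subtype _) ∘ₗ (expandTensorEquiv a b N h).toLinearMap = expandMul a b from
    LinearMap.congr_fun this (f ⊗ₜ g)
  refine ((basisHomogeneousSubmoduleFinTwo R a).tensorProduct
    (basisHomogeneousSubmoduleFinTwo R b)).ext fun ⟨i, j⟩ => ?_
  rw [LinearMap.comp_apply, LinearEquiv.coe_coe, expandTensorEquiv, Module.Basis.equiv_apply]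
  simpa [expandMul] using (expand_mul_monomial h i j).symm

end MvPolynomial

/-- For `p` prime there is an isomorphism of `F_p[SL₂(F_p)]`-modules
`V_1 ⊗ V_{p-1} ≅ V_{2p-1}` (Steinberg tensor product decomposition restricted
to `SL₂(F_p)`). -/
theorem V2pm1_iso_V1_tensor_Vpm1 (p : ℕ) [Fact p.Prime]
    (hact : ∀ (g : Matrix.SpecialLinearGroup (Fin 2) (ZMod p)) (m : ℕ),
      ∀ f ∈ homogeneousSubmodule (Fin 2) (ZMod p) m,
        matAct (↑g : Matrix (Fin 2) (Fin 2) (ZMod p)) f ∈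
          homogeneousSubmodule (Fin 2) (ZMod p) m) :
    ∃ Φ : (↥(homogeneousSubmodule (Fin 2) (ZMod p) 1) ⊗[ZMod p]
            ↥(homogeneousSubmodule (Fin 2) (ZMod p) (p - 1))) ≃ₗ[ZMod p]
          ↥(homogeneousSubmodule (Fin 2) (ZMod p) (2 * p - 1)),
      ∀ (g : Matrix.SpecialLinearGroup (Fin 2) (ZMod p))
        (a : ↥(homogeneousSubmodule (Fin 2) (ZMod p) 1))
        (b : ↥(homogeneousSubmodule (Fin 2) (ZMod p) (p - 1))),
        (Φ ((⟨matAct (↑g : Matrix (Fin 2) (Fin 2) (ZMod p)) a.1, hact g 1 a.1 a.2⟩ :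
              ↥(homogeneousSubmodule (Fin 2) (ZMod p) 1)) ⊗ₜ
            (⟨matAct (↑g : Matrix (Fin 2) (Fin 2) (ZMod p)) b.1, hact g (p - 1) b.1 b.2⟩ :
              ↥(homogeneousSubmodule (Fin 2) (ZMod p) (p - 1)))) : MvPolynomial (Fin 2) (ZMod p)) =
          matAct (↑g : Matrix (Fin 2) (Fin 2) (ZMod p)) (Φ (a ⊗ₜ b) : MvPolynomial (Fin 2) (ZMod p)) := by
  have hp : 1 ≤ p := (Fact.out : p.Prime).one_le
  refine ⟨expandTensorEquiv 1 (p - 1) (2 * p - 1) (by omega), fun g a b => ?_⟩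
  simp only [expandTensorEquiv_tmul, Nat.sub_add_cancel hp, expand_zmod, map_mul, map_pow]
end

section
/- For p an odd prime and 2 ≤ k ≤ p−1, the exact sequence of F_q[SL_2(F_q)]-modules 0 → V_{k-2} → V_{k+(q-1)}/D(V_k) → coker → 0, with first map induced by multiplication by θ_q, does not split. -/
/-!
Average over the unipotent matrices `u_t = [[1, t], [0, 1]]` with weights `t`:
`A f = ∑ₜ t · u_t f`. Since `θ_q` is `u_t`-invariant and `∑ₜ tⁱ` vanishes for `0 < i < q - 1`,
`A` kills `θ_q · V_{k-2}`, while `A (X^k Y^{q-1}) = X^{k+q-2} Y`. A stable complement `M` would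
therefore contain `X^{k+q-2} Y`, which lies in `D(V_k) + θ_q · V_{k-2}` (as
`D(X^{k-1} Y) + θ_q X^{k-2} = k X^{k+q-2} Y`), hence in `D(V_k)`. But no `D f` has this form:
the coefficient of `X^{k+q-2} Y` in `D f` is `k - 1` times that of `X^{k-1} Y^q`.
-/

open MvPolynomial

open Finset

section PowerSums

variable {F A : Type*} [Field F] [Fintype F] [CommRing A] [Algebra F A]

local notation "q" => Fintype.card F

theorem FiniteField.sum_pow_card_sub_one_s19 : ∑ t : F, t ^ (q - 1) = -1 := by
  classical
  have hq : 1 < q := Fintype.one_lt_card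
  calc ∑ t : F, t ^ (q - 1) = ∑ _t ∈ univ.erase (0 : F), (1 : F) := by
        rw [← add_sum_erase _ _ (mem_univ 0), zero_pow (by omega), zero_add]
        exact sum_congr rfl fun t ht => pow_card_sub_one_eq_one t (ne_of_mem_erase ht)
    _ = -1 := by
        rw [sum_const, card_erase_of_mem (mem_univ 0), Finset.card_univ, nsmul_one,
          Nat.cast_sub hq.le, cast_card_eq_zero, Nat.cast_one, zero_sub]

theorem FiniteField.sum_pow_eq_zero_of_le_card (hq : 2 < q) {i : ℕ} (hiq : i ≤ q)
    (hi : i ≠ q - 1) : ∑ t : F, t ^ i = 0 := by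
  obtain hlt | rfl : i < q - 1 ∨ i = q := by omega
  · exact sum_pow_lt_card_sub_one F i hlt
  · simpa only [pow_card, pow_one] using sum_pow_lt_card_sub_one F 1 (by omega)

theorem FiniteField.sum_smul_smul_add_pow (x y : A) (b : ℕ) :
    ∑ t : F, t • (t • x + y) ^ b =
      ∑ j ∈ range (b + 1), (∑ t : F, t ^ (j + 1)) • (b.choose j • (x ^ j * y ^ (b - j))) := by
  simp_rw [add_pow, smul_pow, smul_sum, sum_smul]
  rw [sum_comm]
  refine sum_congr rfl fun j _ => sum_congr rfl fun t _ => ?_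
  rw [pow_succ', ← smul_smul, smul_mul_assoc, smul_mul_assoc, nsmul_eq_mul,
    mul_comm (b.choose j : A)]

theorem FiniteField.sum_smul_smul_add_pow_of_lt {b : ℕ} (hb : b + 2 < q) (x y : A) :
    ∑ t : F, t • (t • x + y) ^ b = 0 := by
  rw [sum_smul_smul_add_pow]
  refine sum_eq_zero fun j hj => ?_
  rw [sum_pow_lt_card_sub_one F _ (by have := mem_range.mp hj; omega), zero_smul]

theorem FiniteField.sum_smul_smul_add_pow_card_sub_one (hq : 2 < q) (x y : A) :
    ∑ t : F, t • (t • x + y) ^ (q - 1) = x ^ (q - 2) * y := by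
  rw [sum_smul_smul_add_pow, sum_eq_single (q - 2)]
  · have hchoose : (q - 1).choose (q - 2) = q - 1 := by
      rw [show q - 1 = q - 2 + 1 by omega, Nat.choose_succ_self_right]
    -- the binomial coefficient `q - 1 = -1` cancels the power sum `-1`
    rw [show q - 2 + 1 = q - 1 by omega, sum_pow_card_sub_one_s19, hchoose,
      show q - 1 - (q - 2) = 1 by omega, pow_one, neg_one_smul, ← Nat.cast_smul_eq_nsmul F,
      Nat.cast_sub (by omega), cast_card_eq_zero, Nat.cast_one, zero_sub, neg_one_smul, neg_neg]
  · intro j hj hne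
    rw [sum_pow_eq_zero_of_le_card hq (by have := mem_range.mp hj; omega) (by omega), zero_smul]
  · simp only [mem_range, not_lt]
    omega

end PowerSums

section Monomials

variable {R : Type*} [CommRing R]

theorem X_pow_mul_X_pow_mem_homogeneousSubmodule (i j : ℕ) :
    (X 0 ^ i * X 1 ^ j : MvPolynomial (Fin 2) R) ∈ homogeneousSubmodule (Fin 2) R (i + j) :=
  (isHomogeneous_X_pow 0 i).mul (isHomogeneous_X_pow 1 j)

theorem coeff_X_pow_mul_pderiv (i : Fin 2) (q : ℕ) (ν : Fin 2 →₀ ℕ)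
    (f : MvPolynomial (Fin 2) R) :
    coeff (ν + Finsupp.single i q) (X i ^ q * pderiv i f) =
      coeff (ν + Finsupp.single i 1) f * (ν i + 1) := by
  rw [X_pow_eq_monomial, add_comm ν, coeff_monomial_mul, one_mul, coeff_pderiv]

theorem coeff_X_pow_mul_of_lt (i : Fin 2) {q : ℕ} {m : Fin 2 →₀ ℕ} (hm : m i < q)
    (g : MvPolynomial (Fin 2) R) : coeff m (X i ^ q * g) = 0 := by
  rw [X_pow_eq_monomial, coeff_monomial_mul', if_neg fun h => by simpa using (h i).trans_lt hm]

theorem matAct_unipotent_X_zero (t : R) :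
    matAct !![1, t; 0, 1] (X 0 : MvPolynomial (Fin 2) R) = X 0 := by
  simp [matAct, Fin.sum_univ_two]

theorem matAct_unipotent_X_one (t : R) :
    matAct !![1, t; 0, 1] (X 1 : MvPolynomial (Fin 2) R) = t • X 0 + X 1 := by
  simp [matAct, Fin.sum_univ_two, smul_eq_C_mul]

theorem matAct_unipotent_X_pow_mul_X_pow (t : R) (a b : ℕ) :
    matAct !![1, t; 0, 1] (X 0 ^ a * X 1 ^ b : MvPolynomial (Fin 2) R) =
      X 0 ^ a * (t • X 0 + X 1) ^ b := by
  rw [map_mul, map_pow, map_pow, matAct_unipotent_X_zero, matAct_unipotent_X_one]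

theorem monomial_one_eq_X_pow_mul_X_pow (μ : Fin 2 →₀ ℕ) :
    monomial μ (1 : R) = X 0 ^ μ 0 * X 1 ^ μ 1 := by
  rw [monomial_eq, C_1, one_mul, Finsupp.prod_fintype _ _ (by simp), Fin.prod_univ_two]

theorem serreDLin_apply (q : ℕ) (f : MvPolynomial (Fin 2) R) :
    serreDLin R q f = X 0 ^ q * pderiv 0 f + X 1 ^ q * pderiv 1 f := by
  simp [serreDLin]

theorem serreDLin_X_pow_mul_X_add_theta_mul (q a : ℕ) :
    serreDLin R q (X 0 ^ (a + 1) * X 1) + (X 0 ^ q * X 1 - X 0 * X 1 ^ q) * X 0 ^ a =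
      ((a + 2 : ℕ) : MvPolynomial (Fin 2) R) * (X 0 ^ (a + q) * X 1) := by
  simp only [serreDLin_apply, Derivation.leibniz, Derivation.leibniz_pow, pderiv_X_self,
    pderiv_X_of_ne zero_ne_one, pderiv_X_of_ne one_ne_zero, smul_eq_mul, nsmul_eq_mul]
  push_cast
  ring

open Finsupp in
theorem X_pow_mul_X_notMem_range_serreDLin [Nontrivial R] {q a : ℕ} (ha : a + 1 < q) :
    X 0 ^ (a + q) * X 1 ∉ LinearMap.range (serreDLin R q) := by
  rintro ⟨f, hf⟩
  have hX : (X 0 ^ (a + q) * X 1 : MvPolynomial (Fin 2) R) =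
      monomial (single 0 a + single 1 1 + single 0 q) 1 := by
    rw [add_right_comm, ← single_add, monomial_add_single, X_pow_eq_monomial, pow_one]
  have hν : single 0 a + single 1 1 + single 0 1 = single (0 : Fin 2) (a + 1) + single 1 1 := by
    ext i; fin_cases i <;> simp
  rw [hX] at hf
  have h1 := congrArg (coeff (single 0 a + single 1 1 + single 0 q)) hf
  have h2 := congrArg (coeff (single 0 (a + 1) + single 1 q)) hf
  rw [serreDLin_apply, coeff_add, coeff_X_pow_mul_pderiv,
    coeff_X_pow_mul_of_lt 1 (by simp; omega), add_zero, coeff_monomial, if_pos rfl, hν] at h1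
  rw [serreDLin_apply, coeff_add, coeff_X_pow_mul_pderiv,
    coeff_X_pow_mul_of_lt 0 (by simp; omega), zero_add, coeff_monomial,
    if_neg fun h => by have := congr($h 1); simp at this; omega,
    single_eq_of_ne (by simp), Nat.cast_zero, zero_add, mul_one] at h2
  rw [h2, zero_mul] at h1
  exact zero_ne_one h1

theorem X_pow_mul_X_mem_map_serreDLin_sup {F : Type*} [Field F] {q a : ℕ}
    (ha : ((a + 2 : ℕ) : F) ≠ 0) :
    X 0 ^ (a + q) * X 1 ∈
      Submodule.map (serreDLin F q) (homogeneousSubmodule (Fin 2) F (a + 2)) ⊔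
        Submodule.map (LinearMap.mulLeft F (X 0 ^ q * X 1 - X 0 * X 1 ^ q))
          (homogeneousSubmodule (Fin 2) F a) := by
  refine Submodule.mem_sup.mpr
    ⟨_, Submodule.mem_map_of_mem (Submodule.smul_mem _ ((a + 2 : ℕ) : F)⁻¹
      (X_pow_mul_X_pow_mem_homogeneousSubmodule (a + 1) 1)),
    _, Submodule.mem_map_of_mem (Submodule.smul_mem _ ((a + 2 : ℕ) : F)⁻¹
      (by simpa using X_pow_mul_X_pow_mem_homogeneousSubmodule (R := F) a 0)), ?_⟩
  rw [map_smul, map_smul, pow_one, LinearMap.mulLeft_apply, ← smul_add,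
    serreDLin_X_pow_mul_X_add_theta_mul, ← map_natCast C, ← smul_eq_C_mul, smul_smul,
    inv_mul_cancel₀ ha, one_smul]

end Monomials

section UnipotentAverage

variable {F : Type*} [Field F] [Fintype F]

local notation "q" => Fintype.card F

theorem matAct_unipotent_theta (t : F) :
    matAct !![1, t; 0, 1] (X 0 ^ q * X 1 - X 0 * X 1 ^ q : MvPolynomial (Fin 2) F) =
      X 0 ^ q * X 1 - X 0 * X 1 ^ q := by
  have hfrob : (t • X 0 + X 1 : MvPolynomial (Fin 2) F) ^ q = t • X 0 ^ q + X 1 ^ q := by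
    simpa using map_add (FiniteField.frobeniusAlgHom F (MvPolynomial (Fin 2) F)) (t • X 0) (X 1)
  rw [map_sub, map_mul, map_mul, map_pow, map_pow, matAct_unipotent_X_zero,
    matAct_unipotent_X_one, hfrob]
  simp only [smul_eq_C_mul]
  ring

variable (F) in
noncomputable def unipotentAverage : MvPolynomial (Fin 2) F →ₗ[F] MvPolynomial (Fin 2) F :=
  ∑ t : F, t • (matAct !![1, t; 0, 1]).toLinearMap

theorem unipotentAverage_apply (f : MvPolynomial (Fin 2) F) :
    unipotentAverage F f = ∑ t : F, t • matAct !![1, t; 0, 1] f := by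
  simp [unipotentAverage]

theorem unipotentAverage_mem {M : Submodule F (MvPolynomial (Fin 2) F)}
    (hM : ∀ g : Matrix.SpecialLinearGroup (Fin 2) F, ∀ f ∈ M,
      matAct (g : Matrix (Fin 2) (Fin 2) F) f ∈ M)
    {f : MvPolynomial (Fin 2) F} (hf : f ∈ M) : unipotentAverage F f ∈ M := by
  rw [unipotentAverage_apply]
  exact M.sum_mem fun t _ => M.smul_mem t (hM ⟨!![1, t; 0, 1], by simp⟩ f hf)

theorem unipotentAverage_theta_mul (f : MvPolynomial (Fin 2) F) :
    unipotentAverage F ((X 0 ^ q * X 1 - X 0 * X 1 ^ q) * f) =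
      (X 0 ^ q * X 1 - X 0 * X 1 ^ q) * unipotentAverage F f := by
  simp only [unipotentAverage_apply, map_mul, matAct_unipotent_theta, mul_sum, mul_smul_comm]

theorem unipotentAverage_X_pow_mul_X_pow (a b : ℕ) :
    unipotentAverage F (X 0 ^ a * X 1 ^ b) = X 0 ^ a * ∑ t : F, t • (t • X 0 + X 1) ^ b := by
  simp only [unipotentAverage_apply, matAct_unipotent_X_pow_mul_X_pow, mul_sum, mul_smul_comm]

theorem unipotentAverage_X_pow_mul_X_pow_card_sub_one (hq : 2 < q) (a : ℕ) :
    unipotentAverage F (X 0 ^ a * X 1 ^ (q - 1)) = X 0 ^ (a + q - 2) * X 1 := by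
  rw [unipotentAverage_X_pow_mul_X_pow, FiniteField.sum_smul_smul_add_pow_card_sub_one hq,
    ← mul_assoc, ← pow_add, Nat.add_sub_assoc hq.le]

theorem homogeneousSubmodule_le_ker_unipotentAverage {d : ℕ} (hd : d + 2 < q) :
    homogeneousSubmodule (Fin 2) F d ≤ LinearMap.ker (unipotentAverage F) := by
  rw [homogeneousSubmodule_eq_finsupp_supported, AddMonoidAlgebra.supported_eq_span_single,
    Submodule.span_le]
  rintro _ ⟨μ, hμ, rfl⟩
  have hμd : μ 0 + μ 1 = d := by simpa [Finsupp.degree_eq_sum, Fin.sum_univ_two] using hμ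
  change unipotentAverage F (monomial μ 1) = 0
  rw [monomial_one_eq_X_pow_mul_X_pow, unipotentAverage_X_pow_mul_X_pow,
    FiniteField.sum_smul_smul_add_pow_of_lt (by omega), mul_zero]

theorem X_pow_mul_X_mem_of_mem_sup {M : Submodule F (MvPolynomial (Fin 2) F)}
    (hM : ∀ g : Matrix.SpecialLinearGroup (Fin 2) F, ∀ f ∈ M,
      matAct (g : Matrix (Fin 2) (Fin 2) F) f ∈ M)
    {a : ℕ} (ha : a + 2 < q)
    (h : X 0 ^ (a + 2) * X 1 ^ (q - 1) ∈ M ⊔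
      Submodule.map (LinearMap.mulLeft F (X 0 ^ q * X 1 - X 0 * X 1 ^ q))
        (homogeneousSubmodule (Fin 2) F a)) :
    X 0 ^ (a + q) * X 1 ∈ M := by
  obtain ⟨m, hm, _, ⟨g, hg, rfl⟩, hsum⟩ := Submodule.mem_sup.mp h
  have hAg : unipotentAverage F g = 0 := homogeneousSubmodule_le_ker_unipotentAverage ha hg
  have hAm := congrArg (unipotentAverage F) hsum
  rw [map_add, LinearMap.mulLeft_apply, unipotentAverage_theta_mul, hAg, mul_zero, add_zero,
    unipotentAverage_X_pow_mul_X_pow_card_sub_one (by omega),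
    show a + 2 + q - 2 = a + q by omega] at hAm
  exact hAm ▸ unipotentAverage_mem hM hm

end UnipotentAverage

theorem quotient_sequence_nonsplit_general (F : Type*) [Field F] [Fintype F]
    (p : ℕ) [CharP F p]
    (k : ℕ) (hk2 : 2 ≤ k) (hkp : k ≤ p - 1) :
    ¬ ∃ M : Submodule F (MvPolynomial (Fin 2) F),
      Submodule.map (serreDLin F (Fintype.card F))
          (homogeneousSubmodule (Fin 2) F k) ≤ M ∧
      M ≤ homogeneousSubmodule (Fin 2) F (k + Fintype.card F - 1) ∧
      (∀ g : Matrix.SpecialLinearGroup (Fin 2) F, ∀ f ∈ M,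
        matAct (↑g : Matrix (Fin 2) (Fin 2) F) f ∈ M) ∧
      M ⊓ (Submodule.map (serreDLin F (Fintype.card F))
              (homogeneousSubmodule (Fin 2) F k) ⊔
            Submodule.map
              (LinearMap.mulLeft F (X 0 ^ Fintype.card F * X 1 - X 0 * X 1 ^ Fintype.card F))
              (homogeneousSubmodule (Fin 2) F (k - 2))) =
        Submodule.map (serreDLin F (Fintype.card F))
          (homogeneousSubmodule (Fin 2) F k) ∧
      M ⊔ Submodule.map
            (LinearMap.mulLeft F (X 0 ^ Fintype.card F * X 1 - X 0 * X 1 ^ Fintype.card F))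
            (homogeneousSubmodule (Fin 2) F (k - 2)) =
        homogeneousSubmodule (Fin 2) F (k + Fintype.card F - 1) := by
  rintro ⟨M, -, -, hstab, hinf, hsup⟩
  obtain ⟨a, rfl⟩ : ∃ a, k = a + 2 := ⟨k - 2, by omega⟩
  rw [Nat.add_sub_cancel] at hinf hsup
  have hpq : p ≤ Fintype.card F := by
    obtain ⟨n, -, hcard⟩ := FiniteField.card F p
    exact hcard ▸ Nat.le_self_pow n.ne_zero p
  have hk : ((a + 2 : ℕ) : F) ≠ 0 := by
    rw [Ne, CharP.cast_eq_zero_iff F p]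
    exact fun hdvd => by have := Nat.le_of_dvd (by omega) hdvd; omega
  have hw : X 0 ^ (a + Fintype.card F) * X 1 ∈ M := by
    refine X_pow_mul_X_mem_of_mem_sup hstab (by omega) ?_
    rw [hsup, show a + 2 + Fintype.card F - 1 = a + 2 + (Fintype.card F - 1) by omega]
    exact X_pow_mul_X_pow_mem_homogeneousSubmodule _ _
  have hwD := hinf ▸ Submodule.mem_inf.mpr ⟨hw, X_pow_mul_X_mem_map_serreDLin_sup hk⟩
  exact X_pow_mul_X_notMem_range_serreDLin (by omega) (LinearMap.map_le_range hwD)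

/-- For `p` an odd prime and `2 ≤ k ≤ p − 1`, the exact sequence of
`F_q[SL₂(F_q)]`-modules `0 → V_{k-2} → V_{k+(q-1)}/D(V_k) → coker → 0` (first map
induced by multiplication by `θ_q`) does not split: there is no `SL₂(F_q)`-stable
submodule `M` with `D(V_k) ≤ M ≤ V_{k+(q-1)}` such that `M/D(V_k)` is a
complement of the image of `θ_q·V_{k-2}` in `V_{k+(q-1)}/D(V_k)`. -/
theorem quotient_sequence_nonsplit (F : Type*) [Field F] [Fintype F]
    (p n : ℕ) (hp : p.Prime) (hodd : Odd p) [CharP F p]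
    (hq : Fintype.card F = p ^ n) (hn : 0 < n)
    (k : ℕ) (hk2 : 2 ≤ k) (hkp : k ≤ p - 1) :
    ¬ ∃ M : Submodule F (MvPolynomial (Fin 2) F),
      Submodule.map (serreDLin F (Fintype.card F))
          (homogeneousSubmodule (Fin 2) F k) ≤ M ∧
      M ≤ homogeneousSubmodule (Fin 2) F (k + Fintype.card F - 1) ∧
      (∀ g : Matrix.SpecialLinearGroup (Fin 2) F, ∀ f ∈ M,
        matAct (↑g : Matrix (Fin 2) (Fin 2) F) f ∈ M) ∧
      M ⊓ (Submodule.map (serreDLin F (Fintype.card F))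
              (homogeneousSubmodule (Fin 2) F k) ⊔
            Submodule.map
              (LinearMap.mulLeft F (X 0 ^ Fintype.card F * X 1 - X 0 * X 1 ^ Fintype.card F))
              (homogeneousSubmodule (Fin 2) F (k - 2))) =
        Submodule.map (serreDLin F (Fintype.card F))
          (homogeneousSubmodule (Fin 2) F k) ∧
      M ⊔ Submodule.map
            (LinearMap.mulLeft F (X 0 ^ Fintype.card F * X 1 - X 0 * X 1 ^ Fintype.card F))
            (homogeneousSubmodule (Fin 2) F (k - 2)) =
        homogeneousSubmodule (Fin 2) F (k + Fintype.card F - 1) :=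
  quotient_sequence_nonsplit_general F p k hk2 hkp
end
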